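/- On a non-degenerate triangle T, the function φ_{t_i,0} = 6 λ_j λ_k t_i belongs to P^{2-}(T), its mean tangential component over edge e_i equals 1, and all other eight sBDFM nodal functionals vanish on it. -/

import Mathlib

open MeasureTheory
open scoped Classical

noncomputable section

/-- The plane. -/
abbrev V2 : Type := ℝ × ℝ

/-- Euclidean dot product on the plane. -/
def dot2 (u v : V2) : ℝ := u.1 * v.1 + u.2 * v.2

/-- 2D cross product. -/
def cross2 (u v : V2) : ℝ := u.1 * v.2 - u.2 * v.1

/-- Euclidean norm on the plane. -/
def enorm2 (u : V2) : ℝ := Real.sqrt (u.1 ^ 2 + u.2 ^ 2)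

/-- `f` is (the restriction of) a polynomial of total degree at most `k`. -/
def IsPolyDeg (k : ℕ) (f : V2 → ℝ) : Prop :=
  ∃ p : MvPolynomial (Fin 2) ℝ, p.totalDegree ≤ k ∧
    ∀ x : V2, f x = MvPolynomial.eval (fun i : Fin 2 => if i = 0 then x.1 else x.2) p

/-- A vector field whose two components are polynomials of degree at most `k`. -/
def IsVPolyDeg (k : ℕ) (v : V2 → V2) : Prop :=
  IsPolyDeg k (fun x => (v x).1) ∧ IsPolyDeg k (fun x => (v x).2)

/-- partial derivative in the `x` direction -/
def pd1 (f : V2 → ℝ) (x : V2) : ℝ := fderiv ℝ f x (1, 0)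

/-- partial derivative in the `y` direction -/
def pd2 (f : V2 → ℝ) (x : V2) : ℝ := fderiv ℝ f x (0, 1)

/-- `curl` of a scalar function: `(∂w/∂y, -∂w/∂x)`. -/
def curl2 (w : V2 → ℝ) : V2 → V2 := fun x => (pd2 w x, - pd1 w x)

/-- divergence of a planar vector field -/
def div2 (v : V2 → V2) (x : V2) : ℝ :=
  pd1 (fun y => (v y).1) x + pd2 (fun y => (v y).2) x

/-- Parametrization of the segment from `p` to `q`. -/
def seg (p q : V2) (s : ℝ) : V2 := p + s • (q - p)

/-- A non-degenerate triangle, together with its barycentric coordinates `lam i`,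
unit outward normals `nrm i` and unit tangents `tang i` of the edges `e i`
(the edge `e i` being opposite the vertex `a i`, joining `a (i+1)` and `a (i+2)`),
oriented so that `nrm i × tang i > 0`. -/
structure Triangle where
  a : Fin 3 → V2
  indep : AffineIndependent ℝ a
  lam : Fin 3 → V2 → ℝ
  lam_affine : ∀ i, ∃ (L : V2 →ₗ[ℝ] ℝ) (c : ℝ), ∀ x, lam i x = L x + c
  lam_apply : ∀ i j, lam i (a j) = if i = j then (1 : ℝ) else 0
  nrm : Fin 3 → V2
  tang : Fin 3 → V2
  nrm_unit : ∀ i, enorm2 (nrm i) = 1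
  tang_unit : ∀ i, enorm2 (tang i) = 1
  tang_parallel : ∀ i, ∃ c : ℝ, a (i + 2) - a (i + 1) = c • tang i
  nrm_orth : ∀ i, dot2 (nrm i) (tang i) = 0
  nrm_outward : ∀ i, dot2 (nrm i) (a i - a (i + 1)) < 0
  orient : ∀ i, 0 < cross2 (nrm i) (tang i)

/-- The (closed) triangle as a subset of the plane. -/
def triSet (T : Triangle) : Set V2 := convexHull ℝ (Set.range T.a)

/-- Parametrization of the edge `e i` of `T` (from `a (i+1)` to `a (i+2)`). -/
def epara (T : Triangle) (i : Fin 3) (s : ℝ) : V2 := seg (T.a (i + 1)) (T.a (i + 2)) s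

/-- Length of edge `e i`. -/
def elen (T : Triangle) (i : Fin 3) : ℝ := enorm2 (T.a (i + 2) - T.a (i + 1))

/-- Area of the triangle. -/
def areaT (T : Triangle) : ℝ := |cross2 (T.a 1 - T.a 0) (T.a 2 - T.a 0)| / 2

/-- The normal component of `v` on each edge of `T` is a polynomial of degree at
most one along that edge. -/
def NormalP1 (T : Triangle) (v : V2 → V2) : Prop :=
  ∀ i : Fin 3, ∃ α β : ℝ, ∀ s ∈ Set.Icc (0 : ℝ) 1,
    dot2 (v (epara T i s)) (T.nrm i) = α + β * s

/-- Membership in `P^{2-}(T)`: vector-valued quadratic polynomials whose normal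
components on the edges are of degree at most one. -/
def memP2m (T : Triangle) (v : V2 → V2) : Prop := IsVPolyDeg 2 v ∧ NormalP1 T v

/-- sBDFM nodal functional: mean over edge `e i` of `v·n_i`. -/
def fN0 (T : Triangle) (i : Fin 3) (v : V2 → V2) : ℝ :=
  ∫ s in (0:ℝ)..1, dot2 (v (epara T i s)) (T.nrm i)

/-- sBDFM nodal functional: mean over edge `e i` of `v·n_i (λ_{i+1} − λ_{i+2})`. -/
def fN1 (T : Triangle) (i : Fin 3) (v : V2 → V2) : ℝ :=
  ∫ s in (0:ℝ)..1,
    dot2 (v (epara T i s)) (T.nrm i) *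
      (T.lam (i + 1) (epara T i s) - T.lam (i + 2) (epara T i s))

/-- sBDFM nodal functional: mean over edge `e i` of `v·t_i`. -/
def fT0 (T : Triangle) (i : Fin 3) (v : V2 → V2) : ℝ :=
  ∫ s in (0:ℝ)..1, dot2 (v (epara T i s)) (T.tang i)

/-- The claimed nodal basis function `φ_{t_i,0} = 6 λ_j λ_k t_i` (with `j = i+1`, `k = i+2`). -/
def phiT0 (T : Triangle) (i : Fin 3) : V2 → V2 := fun x =>
  (6 * T.lam (i + 1) x * T.lam (i + 2) x) • T.tang i


/-! On the edge `e_i`, parametrised by `s ∈ [0, 1]`, the barycentric coordinates are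
`λ_j = 1 - s`, `λ_k = s`, so `φ` restricts to `6 (1 - s) s t_i`: its normal component vanishes and
its tangential mean is `∫₀¹ 6 (1 - s) s ds = 1`. On the other two edges one of `λ_j`, `λ_k` is the
coordinate of the opposite vertex, which vanishes there, so `φ` itself vanishes. -/

lemma dot2_smul_left (c : ℝ) (u v : V2) : dot2 (c • u) v = c * dot2 u v := by
  simp only [dot2, Prod.smul_fst, Prod.smul_snd, smul_eq_mul]; ring

lemma dot2_comm (u v : V2) : dot2 u v = dot2 v u := by
  unfold dot2; ring

@[simp]
lemma dot2_zero_left (v : V2) : dot2 0 v = 0 := by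
  simp [dot2]

lemma dot2_self_of_enorm2_eq_one {u : V2} (hu : enorm2 u = 1) : dot2 u u = 1 := by
  rw [enorm2, Real.sqrt_eq_one] at hu
  rw [dot2, ← hu]; ring

lemma IsPolyDeg.mul {k l : ℕ} {f g : V2 → ℝ} (hf : IsPolyDeg k f) (hg : IsPolyDeg l g) :
    IsPolyDeg (k + l) fun x => f x * g x := by
  obtain ⟨p, hp, hfp⟩ := hf
  obtain ⟨q, hq, hgq⟩ := hg
  exact ⟨p * q, (MvPolynomial.totalDegree_mul p q).trans (add_le_add hp hq),
    fun x => by simp [hfp, hgq]⟩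

lemma isPolyDeg_const (c : ℝ) : IsPolyDeg 0 fun _ => c :=
  ⟨MvPolynomial.C c, by simp, fun x => by simp⟩

lemma IsPolyDeg.isVPolyDeg_smul {k : ℕ} {f : V2 → ℝ} (hf : IsPolyDeg k f) (u : V2) :
    IsVPolyDeg k fun x => f x • u :=
  ⟨hf.mul (isPolyDeg_const u.1), hf.mul (isPolyDeg_const u.2)⟩

lemma isPolyDeg_one_of_affine (L : V2 →ₗ[ℝ] ℝ) (c : ℝ) : IsPolyDeg 1 fun x => L x + c := by
  open MvPolynomial in
  refine ⟨C (L (1, 0)) * X 0 + C (L (0, 1)) * X 1 + C c, ?_, fun x => ?_⟩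
  · refine (totalDegree_add _ _).trans (max_le ((totalDegree_add _ _).trans (max_le ?_ ?_)) ?_)
    · exact (totalDegree_mul _ _).trans (by simp)
    · exact (totalDegree_mul _ _).trans (by simp)
    · simp
  · have hL : L x = x.1 * L (1, 0) + x.2 * L (0, 1) := by
      conv_lhs => rw [show x = x.1 • ((1 : ℝ), (0 : ℝ)) + x.2 • ((0 : ℝ), (1 : ℝ)) by ext <;> simp]
      rw [map_add, map_smul, map_smul, smul_eq_mul, smul_eq_mul]
    simp [hL, mul_comm]

lemma integral_six_mul_one_sub_mul : ∫ s in (0 : ℝ)..1, 6 * (1 - s) * s = 1 := by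
  have h : ∀ s : ℝ, 6 * (1 - s) * s = 6 * s - 6 * s ^ 2 := fun s => by ring
  simp only [h]
  rw [intervalIntegral.integral_sub (Continuous.intervalIntegrable (by fun_prop) _ _)
    (Continuous.intervalIntegrable (by fun_prop) _ _),
    intervalIntegral.integral_const_mul, intervalIntegral.integral_const_mul,
    integral_id, integral_pow]
  norm_num

lemma Fin.three_ne_add_one_ne_add_two : ∀ i : Fin 3, i ≠ i + 1 ∧ i ≠ i + 2 ∧ i + 1 ≠ i + 2 := by
  decide

namespace Triangle

variable (T : Triangle)

lemma isPolyDeg_lam (m : Fin 3) : IsPolyDeg 1 (T.lam m) := by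
  obtain ⟨L, c, h⟩ := T.lam_affine m
  simpa only [← h] using isPolyDeg_one_of_affine L c

lemma lam_epara (m i : Fin 3) (s : ℝ) :
    T.lam m (epara T i s) = (1 - s) * T.lam m (T.a (i + 1)) + s * T.lam m (T.a (i + 2)) := by
  obtain ⟨L, c, h⟩ := T.lam_affine m
  simp only [epara, seg, h, map_add, map_smul, map_sub, smul_eq_mul]
  ring

lemma lam_epara_self (i : Fin 3) (s : ℝ) : T.lam i (epara T i s) = 0 := by
  obtain ⟨h1, h2, -⟩ := Fin.three_ne_add_one_ne_add_two i
  rw [lam_epara, T.lam_apply, T.lam_apply, if_neg h1, if_neg h2]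
  ring

lemma lam_add_one_epara (i : Fin 3) (s : ℝ) : T.lam (i + 1) (epara T i s) = 1 - s := by
  obtain ⟨-, -, h⟩ := Fin.three_ne_add_one_ne_add_two i
  rw [lam_epara, T.lam_apply, T.lam_apply, if_pos rfl, if_neg h]
  ring

lemma lam_add_two_epara (i : Fin 3) (s : ℝ) : T.lam (i + 2) (epara T i s) = s := by
  obtain ⟨-, -, h⟩ := Fin.three_ne_add_one_ne_add_two i
  rw [lam_epara, T.lam_apply, T.lam_apply, if_pos rfl, if_neg h.symm]
  ring

lemma phiT0_epara_self (i : Fin 3) (s : ℝ) :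
    phiT0 T i (epara T i s) = (6 * (1 - s) * s) • T.tang i := by
  rw [phiT0, lam_add_one_epara, lam_add_two_epara]

lemma phiT0_epara_of_ne {i i' : Fin 3} (h : i' ≠ i) (s : ℝ) : phiT0 T i (epara T i' s) = 0 := by
  have hi' : i' = i + 1 ∨ i' = i + 2 := by revert i i'; decide
  rcases hi' with rfl | rfl <;> simp [phiT0, lam_epara_self]

lemma dot2_phiT0_epara_nrm (i i' : Fin 3) (s : ℝ) :
    dot2 (phiT0 T i (epara T i' s)) (T.nrm i') = 0 := by
  rcases eq_or_ne i' i with rfl | h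
  · rw [phiT0_epara_self, dot2_smul_left, dot2_comm, T.nrm_orth, mul_zero]
  · rw [phiT0_epara_of_ne T h, dot2_zero_left]

lemma isVPolyDeg_phiT0 (i : Fin 3) : IsVPolyDeg 2 (phiT0 T i) :=
  (((isPolyDeg_const 6).mul (T.isPolyDeg_lam (i + 1))).mul
    (T.isPolyDeg_lam (i + 2))).isVPolyDeg_smul (T.tang i)

lemma fT0_phiT0_self (i : Fin 3) : fT0 T i (phiT0 T i) = 1 := by
  simp only [fT0, phiT0_epara_self, dot2_smul_left, dot2_self_of_enorm2_eq_one (T.tang_unit i),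
    mul_one, integral_six_mul_one_sub_mul]

end Triangle

/-- `φ_{t_i,0} ∈ P^{2-}(T)`, its mean tangential component over `e_i` is `1`,
and all eight other sBDFM nodal functionals vanish on it. -/
theorem stmt9 (T : Triangle) (i : Fin 3) :
    memP2m T (phiT0 T i) ∧
    fT0 T i (phiT0 T i) = 1 ∧ fN0 T i (phiT0 T i) = 0 ∧ fN1 T i (phiT0 T i) = 0 ∧
    ∀ i' : Fin 3, i' ≠ i →
      fN0 T i' (phiT0 T i) = 0 ∧ fN1 T i' (phiT0 T i) = 0 ∧ fT0 T i' (phiT0 T i) = 0 := by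
  have hnormal := T.dot2_phiT0_epara_nrm i
  have hN0 : ∀ i', fN0 T i' (phiT0 T i) = 0 := fun i' => by simp [fN0, hnormal]
  have hN1 : ∀ i', fN1 T i' (phiT0 T i) = 0 := fun i' => by simp [fN1, hnormal]
  refine ⟨⟨T.isVPolyDeg_phiT0 i, fun i' => ⟨0, 0, fun s _ => by simp [hnormal]⟩⟩,
    T.fT0_phiT0_self i, hN0 i, hN1 i, fun i' hi' => ⟨hN0 i', hN1 i', ?_⟩⟩
  simp [fT0, T.phiT0_epara_of_ne hi']
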